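/- arXiv:2309.10420 — 2 statements merged into one kernel-verified Lean document; each statement's English description precedes it below -/
import Mathlib

section
/- Norm conjugate formula: let p(·) : ℝⁿ → [1,∞) be a measurable exponent with 1 < p⁻ ≤ p⁺ < ∞ and let p'(·) be its pointwise conjugate, 1/p(x) + 1/p'(x) = 1. Then for every measurable f : ℝⁿ → ℝ one has ‖f‖_{L^{p(·)}} ≤ sup { ∫_{ℝⁿ} |f(x)| |g(x)| dx : g measurable with ‖g‖_{L^{p'(·)}} ≤ 1 }. -/
/-!
If `l < ‖f‖`, the modular `∫ (|f|/l)^p` exceeds `1`. Using σ-finiteness, cut its density down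
to `φ ≤ (|f|/l)^p` with `1 < ρ := ∫ φ < ∞`. Then `g := φ^{1/p'} / ρ` has `p'`-modular
`∫ φ / ρ^{p'} ≤ ∫ φ / ρ = 1`, while `|f| g ≥ l φ^{1/p} φ^{1/p'} / ρ = l φ / ρ`, so `∫ |f| g ≥ l`.
-/
open MeasureTheory ENNReal

/-- The Luxemburg norm of an `ℝ≥0∞`-valued function for a variable exponent `p`:
`inf {λ > 0 : ∫ (f x / λ)^{p x} dμ ≤ 1}`. -/
noncomputable def luxNormE {α : Type*} [MeasurableSpace α] (μ : Measure α)
    (p : α → ℝ) (f : α → ℝ≥0∞) : ℝ≥0∞ :=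
  sInf {l : ℝ≥0∞ | 0 < l ∧ ∫⁻ x, (f x / l) ^ (p x) ∂μ ≤ 1}

/-- The Luxemburg norm `‖f‖_{L^{p(·)}(μ)}` of a real-valued function. -/
noncomputable def luxNorm {α : Type*} [MeasurableSpace α] (μ : Measure α)
    (p : α → ℝ) (f : α → ℝ) : ℝ≥0∞ :=
  luxNormE μ p (fun x => ENNReal.ofReal |f x|)

/-- The Hardy-Littlewood maximal function: supremum over open balls containing `x`
of the mean of `|f|` over the ball. -/
noncomputable def maximalFn {n : ℕ} (f : EuclideanSpace ℝ (Fin n) → ℝ)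
    (x : EuclideanSpace ℝ (Fin n)) : ℝ≥0∞ :=
  ⨆ (c : EuclideanSpace ℝ (Fin n)) (r : ℝ) (_ : x ∈ Metric.ball c r),
    (volume (Metric.ball c r))⁻¹ * ∫⁻ y in Metric.ball c r, ENNReal.ofReal |f y|

/-- The Riesz potential `I_σ f (x) = ∫ |f y| |x-y|^{σ-n} dy`. -/
noncomputable def rieszPot {n : ℕ} (σ : ℝ) (f : EuclideanSpace ℝ (Fin n) → ℝ)
    (x : EuclideanSpace ℝ (Fin n)) : ℝ≥0∞ :=
  ∫⁻ y, ENNReal.ofReal |f y| * ENNReal.ofReal (‖x - y‖ ^ (σ - (n : ℝ)))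

/-- The class `P^log(ℝⁿ)` of log-Hölder continuous exponents: there are `C > 0` and
`p_∞ ∈ [1,∞)` with `|1/p(x) - 1/p(y)| ≤ C/log(e + 1/|x-y|)` and
`|1/p(x) - 1/p_∞| ≤ C/log(e + |x|)`. -/
def IsPLog {n : ℕ} (p : EuclideanSpace ℝ (Fin n) → ℝ) : Prop :=
  ∃ C > 0, ∃ pinf : ℝ, 1 ≤ pinf ∧
    (∀ x y, x ≠ y → |1 / p x - 1 / p y| ≤ C / Real.log (Real.exp 1 + 1 / ‖x - y‖)) ∧
    (∀ x, |1 / p x - 1 / pinf| ≤ C / Real.log (Real.exp 1 + ‖x‖))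

/-- The class `P^log([0,∞))` of log-Hölder continuous exponents on the half-line. -/
def IsPLogHalfline (p : ℝ → ℝ) : Prop :=
  ∃ C > 0, ∃ pinf : ℝ, 1 ≤ pinf ∧
    (∀ t ∈ Set.Ici (0 : ℝ), ∀ s ∈ Set.Ici (0 : ℝ), t ≠ s →
      |1 / p t - 1 / p s| ≤ C / Real.log (Real.exp 1 + 1 / |t - s|)) ∧
    (∀ t ∈ Set.Ici (0 : ℝ), |1 / p t - 1 / pinf| ≤ C / Real.log (Real.exp 1 + t))

/-- The heat kernel on `ℝ³`: `g_t(x) = (4πt)^{-3/2} exp(-|x|²/(4t))`. -/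
noncomputable def heatKernel (t : ℝ) (x : EuclideanSpace ℝ (Fin 3)) : ℝ :=
  (4 * Real.pi * t) ^ (-(3 : ℝ) / 2) * Real.exp (-‖x‖ ^ 2 / (4 * t))

section LuxemburgDuality

variable {α : Type*} [MeasurableSpace α] {μ : Measure α}

theorem luxNormE_le_of_lintegral_le {p : α → ℝ} {f : α → ℝ≥0∞} {l : ℝ≥0∞} (hl : 0 < l)
    (h : ∫⁻ x, (f x / l) ^ p x ∂μ ≤ 1) : luxNormE μ p f ≤ l :=
  sInf_le ⟨hl, h⟩

theorem one_lt_lintegral_of_lt_luxNormE {p : α → ℝ} {f : α → ℝ≥0∞} {l : ℝ≥0∞} (hl : 0 < l)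
    (h : l < luxNormE μ p f) : 1 < ∫⁻ x, (f x / l) ^ p x ∂μ :=
  lt_of_not_ge fun h' => (luxNormE_le_of_lintegral_le hl h').not_gt h

theorem exists_measurable_le_lt_lintegral_ne_top [SigmaFinite μ] {u : α → ℝ≥0∞}
    (hu : Measurable u) {c : ℝ≥0∞} (hc : c < ∫⁻ x, u x ∂μ) :
    ∃ φ : α → ℝ≥0∞, Measurable φ ∧ φ ≤ u ∧ c < ∫⁻ x, φ x ∂μ ∧ ∫⁻ x, φ x ∂μ ≠ ∞ := by
  obtain ⟨w, hw0, hw, hwμ⟩ := exists_pos_lintegral_lt_of_sigmaFinite μ one_ne_zero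
  set φ : ℕ → α → ℝ≥0∞ := fun k x => min (u x) (k * w x)
  have hφ : ∀ k, Measurable (φ k) := fun k => hu.min (measurable_const.mul hw.coe_nnreal_ennreal)
  have hφ_mono : Monotone φ := fun k k' hk x =>
    min_le_min le_rfl (mul_le_mul_left (Nat.cast_le.mpr hk) _)
  -- `w > 0` everywhere, so the caps `k * w` increase to `∞` and `φ k ↑ u`.
  have hφ_sup : ∀ x, ⨆ k, φ k x = u x := fun x => by
    simp only [φ, ← inf_iSup_eq, ← ENNReal.iSup_mul, ENNReal.iSup_natCast,
      ENNReal.top_mul (ENNReal.coe_ne_zero.mpr (hw0 x).ne'), inf_top_eq]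
  rw [← funext hφ_sup, lintegral_iSup hφ hφ_mono, lt_iSup_iff] at hc
  obtain ⟨k, hk⟩ := hc
  refine ⟨φ k, hφ k, fun x => min_le_left _ _, hk, ?_⟩
  refine ne_top_of_le_ne_top ?_ (lintegral_mono fun x => min_le_right (u x) (k * w x))
  rw [lintegral_const_mul _ hw.coe_nnreal_ennreal]
  exact ENNReal.mul_ne_top (ENNReal.natCast_ne_top k) (hwμ.trans ENNReal.one_lt_top).ne

theorem exists_luxNorm_le_one_le_lintegral_mul {p p' : α → ℝ} (hp : Measurable p)
    (hpp' : ∀ᵐ x ∂μ, (p x).HolderConjugate (p' x)) {f φ : α → ℝ≥0∞} {l : ℝ≥0∞}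
    (hl : l ≠ ∞) (hφ : Measurable φ) (hφf : ∀ x, φ x ≤ (f x / l) ^ p x)
    (hρ1 : 1 ≤ ∫⁻ x, φ x ∂μ) (hρ : ∫⁻ x, φ x ∂μ ≠ ∞) :
    ∃ g : α → ℝ, Measurable g ∧ luxNorm μ p' g ≤ 1 ∧
      l ≤ ∫⁻ x, f x * ENNReal.ofReal |g x| ∂μ := by
  set ρ := ∫⁻ x, φ x ∂μ
  have hρ0 : ρ ≠ 0 := (zero_lt_one.trans_le hρ1).ne'
  -- The extremal function `φ^{1/p'} / ρ` for Hölder's inequality against `φ^{1/p}`.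
  set G : α → ℝ≥0∞ := fun x => φ x ^ (1 - (p x)⁻¹) / ρ
  have hG : ∀ᵐ x ∂μ, ENNReal.ofReal |(G x).toReal| = φ x ^ (p' x)⁻¹ / ρ := by
    filter_upwards [ae_lt_top hφ hρ, hpp'] with x hφx hpx
    have hGx : G x = φ x ^ (p' x)⁻¹ / ρ := by simp only [G, hpx.one_sub_inv]
    rw [abs_of_nonneg ENNReal.toReal_nonneg, ENNReal.ofReal_toReal, hGx]
    rw [hGx]
    exact ENNReal.div_ne_top (ENNReal.rpow_ne_top_of_nonneg hpx.symm.inv_nonneg hφx.ne) hρ0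
  refine ⟨fun x => (G x).toReal,
    ((hφ.pow (measurable_const.sub hp.inv)).div_const ρ).ennreal_toReal, ?_, ?_⟩
  · have hmod : ∀ᵐ x ∂μ, (ENNReal.ofReal |(G x).toReal| / 1) ^ p' x ≤ φ x * ρ⁻¹ := by
      filter_upwards [hG, hpp'] with x hGx hpx
      have hρp' : ρ ≤ ρ ^ p' x := by
        simpa using ENNReal.rpow_le_rpow_of_exponent_le hρ1 hpx.symm.lt.le
      rw [div_one, hGx, ENNReal.div_rpow_of_nonneg _ _ hpx.symm.nonneg, ← ENNReal.rpow_mul,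
        inv_mul_cancel₀ hpx.symm.ne_zero, ENNReal.rpow_one, div_eq_mul_inv]
      gcongr
    refine luxNormE_le_of_lintegral_le zero_lt_one ((lintegral_mono_ae hmod).trans_eq ?_)
    rw [lintegral_mul_const' _ _ (ENNReal.inv_ne_top.mpr hρ0), ENNReal.mul_inv_cancel hρ0 hρ]
  · have hpair : ∀ᵐ x ∂μ, l / ρ * φ x ≤ f x * ENNReal.ofReal |(G x).toReal| := by
      filter_upwards [hG, hpp'] with x hGx hpx
      have hfl : l * φ x ^ (p x)⁻¹ ≤ f x := calc
        l * φ x ^ (p x)⁻¹ ≤ l * (f x / l) := by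
          gcongr
          simpa [hpx.ne_zero] using
            ENNReal.rpow_le_rpow (hφf x) hpx.inv_nonneg
        _ ≤ f x := ENNReal.mul_div_le
      have hsplit : φ x = φ x ^ (p x)⁻¹ * φ x ^ (p' x)⁻¹ := by
        rw [← ENNReal.rpow_add_of_nonneg _ _ hpx.inv_nonneg hpx.symm.inv_nonneg,
          hpx.inv_add_inv_eq_one, ENNReal.rpow_one]
      calc l / ρ * φ x = l * φ x ^ (p x)⁻¹ * (φ x ^ (p' x)⁻¹ / ρ) := by
            conv_lhs => rw [hsplit]
            rw [div_eq_mul_inv, div_eq_mul_inv]; ring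
        _ ≤ f x * ENNReal.ofReal |(G x).toReal| := by rw [hGx]; gcongr
    calc l = ∫⁻ x, l / ρ * φ x ∂μ := by
          rw [lintegral_const_mul' _ _ (ENNReal.div_ne_top hl hρ0), ENNReal.div_mul_cancel hρ0 hρ]
      _ ≤ _ := lintegral_mono_ae hpair

theorem luxNormE_le_iSup_lintegral_mul [SigmaFinite μ] {p p' : α → ℝ} (hp : Measurable p)
    (hpp' : ∀ᵐ x ∂μ, (p x).HolderConjugate (p' x)) {f : α → ℝ≥0∞} (hf : Measurable f) :
    luxNormE μ p f ≤ ⨆ (g : α → ℝ) (_ : Measurable g) (_ : luxNorm μ p' g ≤ 1),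
      ∫⁻ x, f x * ENNReal.ofReal |g x| ∂μ := by
  refine le_of_forall_lt_imp_le_of_dense fun l hl => ?_
  rcases eq_zero_or_pos l with rfl | hl0
  · exact zero_le
  obtain ⟨φ, hφ, hφu, hφ1, hφρ⟩ := exists_measurable_le_lt_lintegral_ne_top
    ((hf.div_const l).pow hp) (one_lt_lintegral_of_lt_luxNormE hl0 hl)
  obtain ⟨g, hg, hg1, hlg⟩ :=
    exists_luxNorm_le_one_le_lintegral_mul hp hpp' hl.ne_top hφ hφu hφ1.le hφρ
  exact hlg.trans (le_iSup₂_of_le g hg (le_iSup_of_le hg1 le_rfl))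

end LuxemburgDuality

/-- **Norm conjugate formula.** For a measurable exponent `p : ℝⁿ → [1,∞)` with
`1 < p⁻ ≤ p⁺ < ∞` and its pointwise conjugate `p'` (`1/p(x) + 1/p'(x) = 1`), every
measurable `f` satisfies
`‖f‖_{L^{p(·)}} ≤ sup {∫ |f||g| : g measurable, ‖g‖_{L^{p'(·)}} ≤ 1}`. -/
theorem stmt3 (n : ℕ) (p p' : EuclideanSpace ℝ (Fin n) → ℝ)
    (hpmeas : Measurable p)
    (pm pp : ℝ) (hpm : 1 < pm)
    (hbd : ∀ᵐ x ∂(volume : Measure (EuclideanSpace ℝ (Fin n))), pm ≤ p x ∧ p x ≤ pp)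
    (hconj : ∀ x, 1 / p x + 1 / p' x = 1)
    (f : EuclideanSpace ℝ (Fin n) → ℝ) (hf : Measurable f) :
    luxNorm volume p f ≤
      ⨆ (g : EuclideanSpace ℝ (Fin n) → ℝ) (_ : Measurable g)
        (_ : luxNorm volume p' g ≤ 1),
          ∫⁻ x, ENNReal.ofReal |f x| * ENNReal.ofReal |g x| := by
  refine luxNormE_le_iSup_lintegral_mul hpmeas ?_ hf.abs.ennreal_ofReal
  filter_upwards [hbd] with x hx
  exact Real.holderConjugate_iff.mpr ⟨hpm.trans_le hx.1, by simpa only [one_div] using hconj x⟩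
end

section
/- Pointwise Duhamel estimate via the Riesz potential: there exists a constant C > 0 such that for every measurable v : (0,∞) × ℝ³ → [0,∞), every t > 0 and every x ∈ ℝ³, ∫₀^t ∫_{ℝ³} |∇g_{t−s}(x−y)| v(s,y) dy ds ≤ C ∫_{ℝ³} |x−y|^{−2} (ess sup_{s>0} v(s,y)) dy, where g_t is the heat kernel on ℝ³. -/
open MeasureTheory ENNReal

/-! The gradient of the heat kernel is `|∇g_τ(z)| = |z| g_τ(z) / (2τ)`, and the substitution
`τ = 1/x` turns `∫₀^∞ |∇g_τ(z)| dτ` into a Gamma integral, whose value is exactly `1/(4π|z|²)`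
(the size of the gradient of the Newtonian kernel `1/(4π|z|)`). After Tonelli, bounding `v(s,y)`
by its essential supremum in `s` and enlarging the time range `t - s ∈ (0,t)` to `(0,∞)` gives
the estimate with `C = 1/(4π)`. -/

open Set Real

lemma hasGradientAt_heatKernel (t : ℝ) (z : EuclideanSpace ℝ (Fin 3)) :
    HasGradientAt (heatKernel t) (-((2 * t)⁻¹ * heatKernel t z) • z) z := by
  rw [hasGradientAt_iff_hasFDerivAt]
  have hsq : HasFDerivAt (fun x : EuclideanSpace ℝ (Fin 3) => ‖x‖ ^ 2) (2 • innerSL ℝ z) z := by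
    simpa using (hasFDerivAt_id z).norm_sq
  refine ((hsq.neg.mul_const (4 * t)⁻¹).exp.const_mul
    ((4 * π * t) ^ (-(3 : ℝ) / 2))).congr_fderiv ?_
  ext w
  simp [heatKernel, div_eq_mul_inv]
  ring

lemma gradient_heatKernel (t : ℝ) :
    gradient (heatKernel t) = fun z => -((2 * t)⁻¹ * heatKernel t z) • z :=
  funext fun z => (hasGradientAt_heatKernel t z).gradient

lemma norm_gradient_heatKernel {t : ℝ} (ht : 0 ≤ t) (z : EuclideanSpace ℝ (Fin 3)) :
    ‖gradient (heatKernel t) z‖ = (2 * t)⁻¹ * heatKernel t z * ‖z‖ := by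
  rw [gradient_heatKernel, norm_smul, norm_neg,
    Real.norm_of_nonneg (by unfold heatKernel; positivity)]

lemma lintegral_rpow_mul_exp_neg_mul_Ioi {a r : ℝ} (ha : 0 < a) (hr : 0 < r) :
    ∫⁻ x in Ioi 0, ENNReal.ofReal (x ^ (a - 1) * exp (-(r * x))) =
      ENNReal.ofReal ((1 / r) ^ a * Gamma a) := by
  have hI := Real.integral_rpow_mul_exp_neg_mul_Ioi ha hr
  rw [← hI, ofReal_integral_eq_lintegral_ofReal]
  · exact Integrable.of_integral_ne_zero (by rw [hI]; positivity)
  · filter_upwards [ae_restrict_mem measurableSet_Ioi] with x hx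
    exact mul_nonneg (rpow_nonneg (le_of_lt hx) _) (exp_pos _).le

lemma lintegral_Ioi_comp_inv (f : ℝ → ℝ≥0∞) :
    ∫⁻ τ in Ioi 0, f τ = ∫⁻ x in Ioi 0, ENNReal.ofReal ((x ^ 2)⁻¹) * f x⁻¹ := by
  have himage : Inv.inv '' Ioi (0 : ℝ) = Ioi 0 := by ext; simp
  calc ∫⁻ τ in Ioi 0, f τ = ∫⁻ τ in Inv.inv '' Ioi 0, f τ := by rw [himage]
    _ = _ := by
      rw [lintegral_image_eq_lintegral_abs_deriv_mul measurableSet_Ioi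
        (fun x hx => (hasDerivAt_inv (ne_of_gt hx)).hasDerivWithinAt) inv_injective.injOn]
      simp

lemma setLIntegral_Ioo_comp_sub_le (G : ℝ → ℝ≥0∞) (t : ℝ) :
    ∫⁻ s in Ioo 0 t, G (t - s) ≤ ∫⁻ τ in Ioi 0, G τ :=
  calc ∫⁻ s in Ioo 0 t, G (t - s) = ∫⁻ τ in (t - ·) '' Ioo 0 t, G τ := by
        rw [lintegral_image_eq_lintegral_abs_deriv_mul measurableSet_Ioo
          (fun s _ => ((hasDerivAt_id' s).const_sub t).hasDerivWithinAt) sub_right_injective.injOn]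
        simp
    _ = ∫⁻ τ in Ioo 0 t, G τ := by rw [image_const_sub_Ioo, sub_self, sub_zero]
    _ ≤ ∫⁻ τ in Ioi 0, G τ := lintegral_mono_set Ioo_subset_Ioi_self

lemma sq_rpow_div_two {a : ℝ} (ha : 0 ≤ a) (p : ℝ) : (a ^ 2) ^ (p / 2) = a ^ p := by
  rw [← Real.rpow_natCast, ← rpow_mul ha]
  congr 1
  ring

lemma Gamma_three_halves : Gamma (3 / 2) = √π / 2 := by
  rw [show (3 / 2 : ℝ) = 1 / 2 + 1 by norm_num, Gamma_add_one (by norm_num), Gamma_one_half_eq]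
  ring

lemma lintegral_norm_gradient_heatKernel (z : EuclideanSpace ℝ (Fin 3)) :
    ∫⁻ τ in Ioi 0, ENNReal.ofReal ‖gradient (heatKernel τ) z‖ =
      ENNReal.ofReal ((4 * π)⁻¹ * ‖z‖ ^ (-(2 : ℝ))) := by
  rcases eq_or_ne z 0 with rfl | hz
  · -- both sides vanish, the right one because `(0 : ℝ) ^ (-2 : ℝ) = 0`
    simp [gradient_heatKernel]
  have hr : 0 < ‖z‖ := norm_pos_iff.2 hz
  have hintegrand : ∀ x ∈ Ioi (0 : ℝ),
      ENNReal.ofReal ((x ^ 2)⁻¹) * ENNReal.ofReal ‖gradient (heatKernel x⁻¹) z‖ =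
        ENNReal.ofReal ((4 * π) ^ (-(3 : ℝ) / 2) * (‖z‖ / 2)) *
          ENNReal.ofReal (x ^ ((3 / 2 : ℝ) - 1) * exp (-(‖z‖ ^ 2 / 4 * x))) := by
    intro x (hx : 0 < x)
    rw [← ENNReal.ofReal_mul (by positivity), ← ENNReal.ofReal_mul (by positivity),
      norm_gradient_heatKernel (by positivity)]
    congr 1
    have hpow : x⁻¹ ^ (-(3 : ℝ) / 2) = x ^ (1 / 2 : ℝ) * x := by
      rw [inv_rpow hx.le, ← rpow_neg hx.le, ← rpow_add_one hx.ne']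
      norm_num
    rw [heatKernel, mul_rpow (by positivity) (inv_nonneg.2 hx.le), hpow]
    norm_num
    field_simp
  rw [lintegral_Ioi_comp_inv, setLIntegral_congr_fun measurableSet_Ioi hintegrand,
    lintegral_const_mul' _ _ ENNReal.ofReal_ne_top,
    lintegral_rpow_mul_exp_neg_mul_Ioi (by norm_num) (by positivity),
    ← ENNReal.ofReal_mul (by positivity)]
  congr 1
  have h4pi : 4 * π = (2 * √π) ^ 2 := by rw [mul_pow, sq_sqrt pi_pos.le]; norm_num
  have hscale : 1 / (‖z‖ ^ 2 / 4) = (2 / ‖z‖) ^ 2 := by field_simp; norm_num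
  rw [h4pi, hscale, sq_rpow_div_two (by positivity), sq_rpow_div_two (by positivity),
    Gamma_three_halves, rpow_neg hr.le, rpow_neg (by positivity)]
  norm_num
  field_simp

lemma setLIntegral_mul_le_mul_essSup {α : Type*} [MeasurableSpace α] {μ : Measure α}
    {s u : Set α} (hsu : s ⊆ u) {f g : α → ℝ≥0∞} (hf : AEMeasurable f (μ.restrict s)) :
    ∫⁻ a in s, f a * g a ∂μ ≤ (∫⁻ a in s, f a ∂μ) * essSup g (μ.restrict u) :=
  calc ∫⁻ a in s, f a * g a ∂μ ≤ ∫⁻ a in s, f a * essSup g (μ.restrict u) ∂μ :=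
        lintegral_mono_ae <| (ae_restrict_of_ae_restrict_of_subset hsu
          (ENNReal.ae_le_essSup g)).mono fun _ ha => by gcongr
    _ = (∫⁻ a in s, f a ∂μ) * essSup g (μ.restrict u) := lintegral_mul_const'' _ hf

/-- **Pointwise Duhamel estimate via the Riesz potential:** there is `C > 0` so that for
every measurable `v : (0,∞) × ℝ³ → [0,∞]`, every `t > 0` and every `x ∈ ℝ³`,
`∫₀^t ∫ |∇g_{t-s}(x-y)| v(s,y) dy ds ≤ C ∫ |x-y|⁻² (ess sup_{s>0} v(s,y)) dy`. -/
theorem stmt12 :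
    ∃ C : ℝ, 0 < C ∧ ∀ v : ℝ → EuclideanSpace ℝ (Fin 3) → ℝ≥0∞,
      Measurable (Function.uncurry v) →
      ∀ t : ℝ, 0 < t → ∀ x : EuclideanSpace ℝ (Fin 3),
        (∫⁻ s in Set.Ioo (0 : ℝ) t, ∫⁻ y,
            ENNReal.ofReal ‖gradient (heatKernel (t - s)) (x - y)‖ * v s y)
          ≤ ENNReal.ofReal C * ∫⁻ y, ENNReal.ofReal (‖x - y‖ ^ (-(2 : ℝ))) *
              essSup (fun s => v s y) (volume.restrict (Set.Ioi (0 : ℝ))) := by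
  refine ⟨(4 * π)⁻¹, by positivity, fun v hv t _ x => ?_⟩
  set K : ℝ → EuclideanSpace ℝ (Fin 3) → ℝ≥0∞ :=
    fun s y => ENNReal.ofReal ‖gradient (heatKernel (t - s)) (x - y)‖
  have hK : Measurable (Function.uncurry K) := by
    simp only [K, Function.uncurry_def, gradient_heatKernel, heatKernel]
    fun_prop
  calc ∫⁻ s in Ioo 0 t, ∫⁻ y, K s y * v s y
      = ∫⁻ y, ∫⁻ s in Ioo 0 t, K s y * v s y :=
        lintegral_lintegral_swap (hK.mul hv).aemeasurable
    _ ≤ ∫⁻ y, (∫⁻ s in Ioo 0 t, K s y) * essSup (fun s => v s y) (volume.restrict (Ioi 0)) :=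
        lintegral_mono fun y => setLIntegral_mul_le_mul_essSup Ioo_subset_Ioi_self
          (hK.comp measurable_prodMk_right).aemeasurable
    _ ≤ ∫⁻ y, ENNReal.ofReal ((4 * π)⁻¹ * ‖x - y‖ ^ (-(2 : ℝ))) *
          essSup (fun s => v s y) (volume.restrict (Ioi 0)) := by
        gcongr with y
        exact (setLIntegral_Ioo_comp_sub_le _ t).trans_eq
          (lintegral_norm_gradient_heatKernel (x - y))
    _ = _ := by
        simp_rw [ENNReal.ofReal_mul (inv_nonneg.2 (by positivity : (0 : ℝ) ≤ 4 * π)), mul_assoc]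
        exact lintegral_const_mul' _ _ ENNReal.ofReal_ne_top
end
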